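/- Let G be a group, k a positive natural number, and s : Fin k → G with symmetric image (for every i there is j with s j = (s i)⁻¹) and with Subgroup.closure (Set.range s) = ⊤. Let π : G →* H be a surjective group homomorphism. Then for every n the expected displacements satisfy E_H(n) ≤ E_G(n), and consequently limsup_{n → ∞} E_H(n)/n ≤ limsup_{n → ∞} E_G(n)/n: the speed of the simple random walk on a quotient marked group is at most the speed on the group (property (∗) of Proposition 6.4 for the speed). -/

import Mathlib

/-
Pushing words forward along `π` turns every word for `g` into a word for `π g`, so
`ℓ_H(π g) ≤ ℓ_G(g)`. Both walks are driven by the same uniformly random word `w` of length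
`n` in the letters `Fin k`, hence `E_G(n)` and `E_H(n)` are averages over the same words and
compare termwise. Since `ℓ_G(g) ≤ n` for every product of `n` letters, `E_G(n) / n ≤ 1`, so
the limsups compare as well.
-/

open Filter

/-- The word length of `g` in the marked group `(G, s)`: the least `m` such that `g` is a
product of `m` generators. -/
noncomputable def wordLength {G : Type*} [Group G] {k : ℕ} (s : Fin k → G) (g : G) : ℕ :=
  sInf {m : ℕ | ∃ w : Fin m → Fin k, (List.ofFn (fun i => s (w i))).prod = g}

/-- The `n`-step distribution of the simple random walk on the marked group `(G, s)`. -/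
noncomputable def rwDist {G : Type*} [Group G] {k : ℕ} (s : Fin k → G) (n : ℕ) (g : G) : ℝ :=
  (Nat.card {w : Fin n → Fin k | (List.ofFn (fun i => s (w i))).prod = g} : ℝ) / k ^ n

/-- The expected displacement at time `n` of the simple random walk on the marked
group `(G, s)`. -/
noncomputable def expectedDisplacement {G : Type*} [Group G] {k : ℕ} (s : Fin k → G)
    (n : ℕ) : ℝ :=
  ∑' g : G, rwDist s n g * (wordLength s g : ℝ)

open Finset

noncomputable def wordProd {G : Type*} [Group G] {k m : ℕ} (s : Fin k → G)
    (w : Fin m → Fin k) : G :=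
  (List.ofFn fun i => s (w i)).prod

section WordLength

variable {G H : Type*} [Group G] [Group H] {k : ℕ} (s : Fin k → G)

theorem map_wordProd (f : G →* H) {m : ℕ} (w : Fin m → Fin k) :
    wordProd (f ∘ s) w = f (wordProd s w) := by
  rw [wordProd, wordProd, map_list_prod, List.map_ofFn]
  rfl

theorem wordLength_le_of_wordProd_eq {m : ℕ} (w : Fin m → Fin k) {g : G}
    (h : wordProd s w = g) : wordLength s g ≤ m :=
  Nat.sInf_le ⟨w, h⟩

theorem wordLength_wordProd_le {m : ℕ} (w : Fin m → Fin k) :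
    wordLength s (wordProd s w) ≤ m :=
  wordLength_le_of_wordProd_eq s w rfl

theorem exists_geodesic_wordProd_eq {m : ℕ} (w : Fin m → Fin k) :
    ∃ v : Fin (wordLength s (wordProd s w)) → Fin k, wordProd s v = wordProd s w :=
  Nat.sInf_mem (s := {m | ∃ v : Fin m → Fin k, wordProd s v = wordProd s w}) ⟨m, w, rfl⟩

theorem wordLength_map_wordProd_le (f : G →* H) {m : ℕ} (w : Fin m → Fin k) :
    wordLength (f ∘ s) (wordProd (f ∘ s) w) ≤ wordLength s (wordProd s w) := by
  obtain ⟨v, hv⟩ := exists_geodesic_wordProd_eq s w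
  exact wordLength_le_of_wordProd_eq _ v (by rw [map_wordProd, map_wordProd, hv])

end WordLength

section ExpectedDisplacement

variable {G H : Type*} [Group G] [Group H] {k : ℕ} (s : Fin k → G)

theorem rwDist_eq_card_div [DecidableEq G] (n : ℕ) (g : G) :
    rwDist s n g = #{w : Fin n → Fin k | wordProd s w = g} / k ^ n := by
  rw [rwDist, ← Nat.card_eq_finsetCard]
  simp only [mem_filter, mem_univ, true_and]
  rfl

theorem expectedDisplacement_eq_sum_div (n : ℕ) :
    expectedDisplacement s n =
      (∑ w : Fin n → Fin k, (wordLength s (wordProd s w) : ℝ)) / k ^ n := by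
  classical
  rw [Finset.sum_comp (fun g => (wordLength s g : ℝ)) (wordProd s), sum_div,
    expectedDisplacement, tsum_eq_sum (s := univ.image (wordProd s))]
  · refine sum_congr rfl fun g _ => ?_
    rw [rwDist_eq_card_div, nsmul_eq_mul]
    ring
  · intro g hg
    rw [rwDist_eq_card_div, filter_false_of_mem fun w _ (hw : wordProd s w = g) =>
      hg (hw ▸ mem_image_of_mem _ (mem_univ w))]
    simp

theorem expectedDisplacement_nonneg (n : ℕ) : 0 ≤ expectedDisplacement s n := by
  rw [expectedDisplacement_eq_sum_div]
  positivity

theorem expectedDisplacement_map_le (f : G →* H) (n : ℕ) :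
    expectedDisplacement (f ∘ s) n ≤ expectedDisplacement s n := by
  rw [expectedDisplacement_eq_sum_div, expectedDisplacement_eq_sum_div]
  gcongr with w
  exact wordLength_map_wordProd_le s f w

theorem expectedDisplacement_le (n : ℕ) : expectedDisplacement s n ≤ n :=
  calc expectedDisplacement s n
      ≤ (∑ _w : Fin n → Fin k, (n : ℝ)) / k ^ n := by
        rw [expectedDisplacement_eq_sum_div]
        gcongr with w
        exact wordLength_wordProd_le s w
    _ = n * ((k : ℝ) ^ n / k ^ n) := by
        simp only [sum_const, card_univ, Fintype.card_fun, Fintype.card_fin, nsmul_eq_mul,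
          Nat.cast_pow]
        ring
    _ ≤ n := mul_le_of_le_one_right n.cast_nonneg (div_self_le_one _)

end ExpectedDisplacement

theorem speed_quotient_le_general {G H : Type*} [Group G] [Group H] (k : ℕ) (s : Fin k → G)
    (π : G →* H) :
    (∀ n : ℕ, expectedDisplacement (⇑π ∘ s) n ≤ expectedDisplacement s n) ∧
    (Filter.atTop.limsup fun n : ℕ => expectedDisplacement (⇑π ∘ s) n / n) ≤
      Filter.atTop.limsup fun n : ℕ => expectedDisplacement s n / n := by
  have hle := expectedDisplacement_map_le s π
  refine ⟨hle, limsup_le_limsup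
    (.of_forall fun n => div_le_div_of_nonneg_right (hle n) n.cast_nonneg) ?_ ?_⟩
  · exact isBoundedUnder_of ⟨0, fun n =>
      div_nonneg (expectedDisplacement_nonneg _ n) n.cast_nonneg⟩ |>.isCoboundedUnder_le
  · exact isBoundedUnder_of ⟨1, fun n =>
      div_le_one_of_le₀ (expectedDisplacement_le s n) n.cast_nonneg⟩

/-- The speed of the simple random walk on a quotient marked group is at most the speed
on the group: the expected displacements satisfy `E_H(n) ≤ E_G(n)` for every `n`, and
consequently the asymptotic speeds compare likewise. -/
theorem speed_quotient_le {G H : Type*} [Group G] [Group H] (k : ℕ) (hk : 0 < k)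
    (s : Fin k → G) (hsym : ∀ i : Fin k, ∃ j : Fin k, s j = (s i)⁻¹)
    (hgen : Subgroup.closure (Set.range s) = ⊤)
    (π : G →* H) (hπ : Function.Surjective π) :
    (∀ n : ℕ, expectedDisplacement (⇑π ∘ s) n ≤ expectedDisplacement s n) ∧
    (Filter.atTop.limsup fun n : ℕ => expectedDisplacement (⇑π ∘ s) n / n) ≤
      Filter.atTop.limsup fun n : ℕ => expectedDisplacement s n / n :=
  speed_quotient_le_general k s π
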